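/- arXiv:1406.4718 — 5 statements merged into one kernel-verified Lean document; each statement's English description precedes it below -/
import Mathlib

section
/- Let G and G' be finite simple graphs with colourings c : V(G) → {1,…,k} and c' : V(G') → {1,…,k}. Let H be the graph obtained from G by adding, for each vertex v ∈ V(G), c(v)+1 new vertices u^v_1,…,u^v_{c(v)+1} together with edges making v, u^v_1, …, u^v_{c(v)+1} into a simple cycle of length c(v)+2; let H' be obtained from G' and c' analogously. Then (G,c) and (G',c') are isomorphic as coloured graphs if and only if H and H' are isomorphic as (uncoloured) graphs. -/
open SimpleGraph

/-- The graph `H` obtained from a coloured graph `(G, c)` by adding, for each vertex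
`v`, the `c v + 1` new vertices `u^v_0, …, u^v_{c v}` together with edges making
`v, u^v_0, …, u^v_{c v}` into a cycle of length `c v + 2`. -/
def cycleAug {V : Type*} (G : SimpleGraph V) (c : V → ℕ) :
    SimpleGraph (V ⊕ (Σ v : V, Fin (c v + 1))) :=
  SimpleGraph.fromRel fun a b =>
    (∃ u v, G.Adj u v ∧ a = Sum.inl u ∧ b = Sum.inl v) ∨
    (∃ v, a = Sum.inl v ∧ b = Sum.inr ⟨v, 0⟩) ∨
    (∃ v, a = Sum.inl v ∧ b = Sum.inr ⟨v, Fin.last (c v)⟩) ∨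
    (∃ v, ∃ i : Fin (c v), a = Sum.inr ⟨v, i.castSucc⟩ ∧ b = Sum.inr ⟨v, i.succ⟩)

/-! In `cycleAug G c` every cycle vertex has degree two, while a vertex `v` of `G` has degree
`deg v + 2`. An isomorphism `f : cycleAug G c ≃g cycleAug G' c'` therefore sends each vertex
of `G` with a neighbour to a vertex of `G'`, and sends the cycle through an isolated vertex `v`,
which is a whole connected component, onto the cycle through an isolated vertex of `G'`. So the
vertex of `G'` whose cycle contains `f (inl v)` defines a bijection `V ≃ W`, and it preserves
adjacency. Colours are read off from sizes: the component of an isolated `v` has `c v + 2`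
vertices, and for a vertex `v` with a neighbour the path of degree-two vertices hanging at `v`
has `c v + 1` vertices; `f` carries that path to the one hanging at the image of `v`. -/

namespace SimpleGraph

variable {α β : Type*} {H : SimpleGraph α} {H' : SimpleGraph β}

lemma Reachable.mem_of_adj_closed {s : Set α} (hs : ∀ x ∈ s, ∀ y, H.Adj x y → y ∈ s)
    {x y : α} (h : H.Reachable x y) (hx : x ∈ s) : y ∈ s := by
  rw [reachable_iff_reflTransGen] at h
  induction h with
  | refl => exact hx
  | tail _ hadj ih => exact hs _ ih _ hadj

def degTwoGraph (H : SimpleGraph α) : SimpleGraph α where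
  Adj x y := H.Adj x y ∧ (H.neighborSet x).encard = 2 ∧ (H.neighborSet y).encard = 2
  symm := ⟨fun _ _ h => ⟨h.1.symm, h.2.2, h.2.1⟩⟩
  loopless := ⟨fun _ h => h.1.ne rfl⟩

@[simp] lemma degTwoGraph_adj {x y : α} : H.degTwoGraph.Adj x y ↔
    H.Adj x y ∧ (H.neighborSet x).encard = 2 ∧ (H.neighborSet y).encard = 2 := Iff.rfl

lemma degTwoGraph_le : H.degTwoGraph ≤ H := fun _ _ h => h.1

lemma Iso.encard_neighborSet (f : H ≃g H') (x : α) :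
    (H'.neighborSet (f x)).encard = (H.neighborSet x).encard :=
  (Set.encard_congr (f.mapNeighborSet x)).symm

def Iso.degTwoGraph (f : H ≃g H') : H.degTwoGraph ≃g H'.degTwoGraph where
  toEquiv := f.toEquiv
  map_rel_iff' := by
    intro x y
    change H'.degTwoGraph.Adj (f x) (f y) ↔ _
    simp only [degTwoGraph_adj, f.map_adj_iff, f.encard_neighborSet]

lemma Iso.encard_setOf_reachable (f : H ≃g H') (x : α) :
    {y | H'.Reachable (f x) y}.encard = {y | H.Reachable x y}.encard :=
  (Set.encard_congr (f.toEquiv.subtypeEquiv fun _ => Iso.reachable_iff.symm)).symm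

end SimpleGraph

namespace cycleAug

open Sum

variable {V : Type*} {G : SimpleGraph V} {c : V → ℕ} {u v w : V}

@[simp] lemma adj_inl_inl : (cycleAug G c).Adj (inl u) (inl v) ↔ G.Adj u v := by
  simp only [cycleAug, fromRel_adj, ne_eq, inl.injEq, exists_eq_right_right', exists_eq_right',
    reduceCtorEq, and_false, exists_false, and_self, or_self, or_false]
  exact ⟨fun h => h.2.elim id .symm, fun h => ⟨h.ne, Or.inl h⟩⟩

@[simp] lemma adj_inl_inr {i : Fin (c w + 1)} :
    (cycleAug G c).Adj (inl v) (inr ⟨w, i⟩) ↔ w = v ∧ (i.val = 0 ∨ i.val = c w) := by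
  obtain rfl | hw := eq_or_ne w v
  · simp [cycleAug, Fin.ext_iff, -Fin.val_eq_zero_iff]
  · simp [cycleAug, hw]

@[simp] lemma adj_inr_inl {i : Fin (c w + 1)} :
    (cycleAug G c).Adj (inr ⟨w, i⟩) (inl v) ↔ w = v ∧ (i.val = 0 ∨ i.val = c w) := by
  rw [adj_comm, adj_inl_inr]

@[simp] lemma adj_inr_inr {i : Fin (c v + 1)} {j : Fin (c w + 1)} :
    (cycleAug G c).Adj (inr ⟨v, i⟩) (inr ⟨w, j⟩) ↔
      v = w ∧ (i.val + 1 = j.val ∨ j.val + 1 = i.val) := by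
  obtain rfl | hvw := eq_or_ne v w
  · simp only [cycleAug, fromRel_adj, ne_eq, inr.injEq, Sigma.mk.injEq, heq_iff_eq, true_and,
      and_assoc, exists_and_left, exists_eq_left', reduceCtorEq, false_and, and_false, exists_false,
      false_or, Fin.ext_iff, Fin.exists_iff, Fin.val_castSucc, Fin.val_succ, exists_prop]
    have := i.isLt; have := j.isLt
    omega
  · simp only [cycleAug, fromRel_adj, ne_eq, inr.injEq, Sigma.mk.injEq, and_assoc, exists_and_left,
      exists_eq_left', hvw, hvw.symm, false_and, and_false, false_or, reduceCtorEq, exists_false,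
      not_false_eq_true]

def root (c : V → ℕ) : V ⊕ (Σ v : V, Fin (c v + 1)) → V := Sum.elim id Sigma.fst

@[simp] lemma root_inl : root c (inl v) = v := rfl

lemma encard_neighborSet_inr (hv : 1 ≤ c v) (i : Fin (c v + 1)) :
    ((cycleAug G c).neighborSet (inr ⟨v, i⟩)).encard = 2 := by
  have hi := i.isLt
  rw [Set.encard_eq_two]
  refine ⟨if (i : ℕ) = 0 then inl v else inr ⟨v, ⟨i - 1, by omega⟩⟩,
    if h : (i : ℕ) = c v then inl v else inr ⟨v, ⟨i + 1, by omega⟩⟩, ?_, ?_⟩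
  · split_ifs <;> simp [Fin.ext_iff, -Fin.val_eq_zero_iff]
    omega
  · ext (u | ⟨w, j⟩)
    · obtain rfl | hu := eq_or_ne u v
      · split_ifs <;> simp [-Fin.val_eq_zero_iff] <;> omega
      · split_ifs <;> simp [hu, hu.symm]
    · obtain rfl | hw := eq_or_ne w v
      · have hj := j.isLt
        split_ifs <;> simp [Fin.ext_iff] <;> omega
      · split_ifs <;> simp [hw, hw.symm]

lemma encard_neighborSet_inl (hv : 1 ≤ c v) :
    ((cycleAug G c).neighborSet (inl v)).encard = (G.neighborSet v).encard + 2 := by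
  have : (cycleAug G c).neighborSet (inl v) =
      inl '' G.neighborSet v ∪ {inr ⟨v, 0⟩, inr ⟨v, Fin.last (c v)⟩} := by
    ext (u | ⟨w, j⟩)
    · simp
    · obtain rfl | hw := eq_or_ne w v
      · simp [Fin.ext_iff, -Fin.val_eq_zero_iff]
      · simp [hw]
  rw [this, Set.encard_union_eq (by simp [Set.disjoint_left]), inl_injective.encard_image,
    Set.encard_pair (by simp [Fin.ext_iff]; omega)]

lemma encard_neighborSet_inl_eq_two_iff (hv : 1 ≤ c v) :
    ((cycleAug G c).neighborSet (inl v)).encard = 2 ↔ G.IsIsolated v := by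
  rw [encard_neighborSet_inl hv, ← neighborSet_eq_empty, ← Set.encard_eq_zero]
  simp

lemma eq_inl_root_of_encard_ne_two (hc : ∀ v, 1 ≤ c v) {x : V ⊕ Σ v : V, Fin (c v + 1)}
    (hx : ((cycleAug G c).neighborSet x).encard ≠ 2) : x = inl (root c x) := by
  obtain x | ⟨v, i⟩ := x
  · rfl
  · exact absurd (encard_neighborSet_inr (hc v) i) hx

lemma exists_eq_inr_of_adj_inl (hc : ∀ v, 1 ≤ c v) {x : V ⊕ Σ v : V, Fin (c v + 1)}
    (hx : ((cycleAug G c).neighborSet x).encard = 2) (h : (cycleAug G c).Adj (inl w) x) :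
    ∃ j, x = inr ⟨w, j⟩ := by
  obtain u | ⟨u, j⟩ := x
  · rw [encard_neighborSet_inl_eq_two_iff (hc u)] at hx
    exact absurd (adj_inl_inl.mp h).symm (hx w)
  · obtain ⟨rfl, -⟩ := adj_inl_inr.mp h
    exact ⟨j, rfl⟩

lemma degTwoGraph_reachable_inr (hv : 1 ≤ c v) (i j : Fin (c v + 1)) :
    (cycleAug G c).degTwoGraph.Reachable (inr ⟨v, i⟩) (inr ⟨v, j⟩) :=
  let gadget : pathGraph (c v + 1) →g (cycleAug G c).degTwoGraph :=
    ⟨fun k => inr ⟨v, k⟩, fun h => ⟨adj_inr_inr.mpr ⟨rfl, pathGraph_adj.mp h⟩,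
      encard_neighborSet_inr hv _, encard_neighborSet_inr hv _⟩⟩
  ((pathGraph_connected _).preconnected i j).map gadget

lemma reachable_inl_root (hc : ∀ v, 1 ≤ c v) (x : V ⊕ Σ v : V, Fin (c v + 1)) :
    (cycleAug G c).Reachable x (inl (root c x)) := by
  obtain v | ⟨v, i⟩ := x
  · rfl
  · exact ((degTwoGraph_reachable_inr (hc v) i 0).mono degTwoGraph_le).trans
      (adj_inr_inl.mpr ⟨rfl, .inl rfl⟩).reachable

lemma root_eq_of_reachable_inl (hv : G.IsIsolated v) {x : V ⊕ Σ v : V, Fin (c v + 1)}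
    (h : (cycleAug G c).Reachable (inl v) x) : root c x = v := by
  refine h.mem_of_adj_closed (s := {x | root c x = v}) ?_ rfl
  rintro (u | ⟨u, i⟩) (rfl : _ = v) (w | ⟨w, j⟩) hadj
  · exact absurd (adj_inl_inl.mp hadj) (hv w)
  · exact (adj_inl_inr.mp hadj).1
  · exact (adj_inr_inl.mp hadj).1.symm
  · exact (adj_inr_inr.mp hadj).1.symm

lemma encard_range_inr (v : V) :
    (Set.range fun i : Fin (c v + 1) => (inr ⟨v, i⟩ : V ⊕ Σ v : V, Fin (c v + 1))).encard =
      c v + 1 := by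
  have hinj : (fun i : Fin (c v + 1) => (inr ⟨v, i⟩ : V ⊕ Σ v : V, Fin (c v + 1))).Injective
    | _, _, rfl => rfl
  rw [← Set.image_univ, hinj.encard_image, Set.encard_univ, ENat.card_eq_coe_fintype_card,
    Fintype.card_fin]
  rfl

lemma encard_setOf_reachable_inl (hc : ∀ v, 1 ≤ c v) (hv : G.IsIsolated v) :
    {x | (cycleAug G c).Reachable (inl v) x}.encard = c v + 2 := by
  have : {x | (cycleAug G c).Reachable (inl v) x} =
      insert (inl v) (Set.range fun i : Fin (c v + 1) => inr ⟨v, i⟩) := by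
    ext x
    refine ⟨fun h => ?_, ?_⟩
    · obtain x | ⟨w, i⟩ := x
      · obtain rfl := root_eq_of_reachable_inl hv h
        exact .inl rfl
      · obtain rfl := root_eq_of_reachable_inl hv h
        exact .inr ⟨i, rfl⟩
    · rintro (rfl | ⟨i, rfl⟩)
      · exact Reachable.refl _
      · exact (reachable_inl_root hc (inr ⟨v, i⟩)).symm
  rw [this, Set.encard_insert_of_notMem (by simp), encard_range_inr, add_assoc]
  rfl

lemma encard_setOf_degTwoGraph_reachable_inr (hv : 1 ≤ c v) (hv' : ¬ G.IsIsolated v)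
    (i : Fin (c v + 1)) :
    {x | (cycleAug G c).degTwoGraph.Reachable (inr ⟨v, i⟩) x}.encard = c v + 1 := by
  have : {x | (cycleAug G c).degTwoGraph.Reachable (inr ⟨v, i⟩) x} =
      Set.range fun j : Fin (c v + 1) => inr ⟨v, j⟩ := by
    ext x
    refine ⟨fun h => h.mem_of_adj_closed ?_ ⟨i, rfl⟩, ?_⟩
    · rintro _ ⟨j, rfl⟩ (u | ⟨u, k⟩) ⟨hadj, -, hu⟩
      · obtain ⟨rfl, -⟩ := adj_inr_inl.mp hadj
        exact absurd ((encard_neighborSet_inl_eq_two_iff hv).mp hu) hv'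
      · obtain ⟨rfl, -⟩ := adj_inr_inr.mp hadj
        exact ⟨k, rfl⟩
    · rintro ⟨j, rfl⟩
      exact degTwoGraph_reachable_inr hv i j
  rw [this, encard_range_inr]

section Iso

variable {W : Type*} {G' : SimpleGraph W} {c' : W → ℕ}

def _root_.SimpleGraph.Iso.cycleAug (e : G ≃g G') (he : ∀ v, c' (e v) = c v) :
    cycleAug G c ≃g cycleAug G' c' where
  toEquiv := Equiv.sumCongr e.toEquiv <|
    Equiv.sigmaCongr e.toEquiv fun v => finCongr (congrArg (· + 1) (he v).symm)
  map_rel_iff' := by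
    rintro (u | ⟨u, i⟩) (v | ⟨v, j⟩)
    all_goals simp [Equiv.sigmaCongr, he, e.map_adj_iff]

variable (hc : ∀ v, 1 ≤ c v) (hc' : ∀ w, 1 ≤ c' w) (f : cycleAug G c ≃g cycleAug G' c')
include hc hc'

lemma apply_inl_of_not_isIsolated (hv : ¬ G.IsIsolated v) :
    f (inl v) = inl (root c' (f (inl v))) := by
  refine eq_inl_root_of_encard_ne_two (G := G') hc' ?_
  rwa [f.encard_neighborSet, Ne, encard_neighborSet_inl_eq_two_iff (hc v)]

lemma root_symm_inl_root (v : V) : root c (f.symm (inl (root c' (f (inl v))))) = v := by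
  by_cases hv : G.IsIsolated v
  · refine root_eq_of_reachable_inl hv ?_
    exact (Iso.symm_apply_reachable.mpr (reachable_inl_root hc' (f (inl v))).symm).symm
  · rw [← apply_inl_of_not_isIsolated hc hc' f hv, RelIso.symm_apply_apply, root_inl]

def rootEquiv : V ≃ W where
  toFun v := root c' (f (inl v))
  invFun w := root c (f.symm (inl w))
  left_inv := root_symm_inl_root hc hc' f
  right_inv w := root_symm_inl_root hc' hc f.symm w

lemma rootEquiv_apply (v : V) : rootEquiv hc hc' f v = root c' (f (inl v)) := rfl

lemma rootEquiv_symm : (rootEquiv hc hc' f).symm = rootEquiv hc' hc f.symm := rfl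

lemma rootEquiv_adj (h : G.Adj u v) : G'.Adj (rootEquiv hc hc' f u) (rootEquiv hc hc' f v) := by
  have hu := apply_inl_of_not_isIsolated hc hc' f (v := u) fun h' => h' v h
  have hv := apply_inl_of_not_isIsolated hc hc' f (v := v) fun h' => h' u h.symm
  rw [← adj_inl_inl (c := c'), rootEquiv_apply, rootEquiv_apply, ← hu, ← hv, f.map_adj_iff,
    adj_inl_inl]
  exact h

lemma rootEquiv_adj_iff : G'.Adj (rootEquiv hc hc' f u) (rootEquiv hc hc' f v) ↔ G.Adj u v := by
  refine ⟨fun h => ?_, rootEquiv_adj hc hc' f⟩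
  simpa [← rootEquiv_symm] using rootEquiv_adj hc' hc f.symm h

lemma isIsolated_rootEquiv (hv : G.IsIsolated v) : G'.IsIsolated (rootEquiv hc hc' f v) := by
  intro w hw
  rw [← (rootEquiv hc hc' f).apply_symm_apply w, rootEquiv_adj_iff] at hw
  exact hv _ hw

lemma colour_rootEquiv_of_isIsolated (hv : G.IsIsolated v) :
    c' (rootEquiv hc hc' f v) = c v := by
  have hroot := reachable_inl_root (G := G') hc' (f (inl v))
  have hcomp : {x | (cycleAug G' c').Reachable (f (inl v)) x} =
      {x | (cycleAug G' c').Reachable (inl (rootEquiv hc hc' f v)) x} :=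
    Set.ext fun _ => ⟨hroot.symm.trans, hroot.trans⟩
  have h := f.encard_setOf_reachable (inl v)
  rw [hcomp, encard_setOf_reachable_inl hc' (isIsolated_rootEquiv hc hc' f hv),
    encard_setOf_reachable_inl hc hv] at h
  norm_cast at h
  omega

lemma colour_rootEquiv_of_not_isIsolated (hv : ¬ G.IsIsolated v) :
    c' (rootEquiv hc hc' f v) = c v := by
  obtain ⟨u, hu⟩ := exists_adj_iff_not_isIsolated.mpr hv
  have hfv : f (inl v) = inl (rootEquiv hc hc' f v) := apply_inl_of_not_isIsolated hc hc' f hv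
  set w := rootEquiv hc hc' f v
  have hw : ¬ G'.IsIsolated w := fun h => h _ (rootEquiv_adj hc hc' f hu)
  have hadj : (cycleAug G' c').Adj (inl w) (f (inr ⟨v, 0⟩)) := by
    rw [← hfv, f.map_adj_iff, adj_inl_inr]
    exact ⟨rfl, .inl rfl⟩
  have hdeg : ((cycleAug G' c').neighborSet (f (inr ⟨v, 0⟩))).encard = 2 := by
    rw [f.encard_neighborSet, encard_neighborSet_inr (hc v)]
  obtain ⟨j, hj⟩ := exists_eq_inr_of_adj_inl hc' hdeg hadj
  have h := f.degTwoGraph.encard_setOf_reachable (inr ⟨v, 0⟩)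
  rw [show f.degTwoGraph (inr ⟨v, 0⟩) = inr ⟨w, j⟩ from hj,
    encard_setOf_degTwoGraph_reachable_inr (hc' w) hw,
    encard_setOf_degTwoGraph_reachable_inr (hc v) hv] at h
  norm_cast at h
  omega

lemma colour_rootEquiv (v : V) : c' (rootEquiv hc hc' f v) = c v := by
  by_cases hv : G.IsIsolated v
  · exact colour_rootEquiv_of_isIsolated hc hc' f hv
  · exact colour_rootEquiv_of_not_isIsolated hc hc' f hv

end Iso

end cycleAug

theorem colouredIso_iff_cycleAug_iso_general {V W : Type*}
    (G : SimpleGraph V) (G' : SimpleGraph W) (k : ℕ) (c : V → ℕ) (c' : W → ℕ)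
    (hc : ∀ v, 1 ≤ c v ∧ c v ≤ k) (hc' : ∀ w, 1 ≤ c' w ∧ c' w ≤ k) :
    (∃ φ : V ≃ W, (∀ u v, G.Adj u v ↔ G'.Adj (φ u) (φ v)) ∧ ∀ v, c' (φ v) = c v) ↔
      Nonempty (cycleAug G c ≃g cycleAug G' c') := by
  refine ⟨fun ⟨φ, hadj, hcol⟩ => ⟨Iso.cycleAug ⟨φ, (hadj _ _).symm⟩ hcol⟩,
    fun ⟨f⟩ => ?_⟩
  have hc₁ v := (hc v).1
  have hc₁' w := (hc' w).1
  exact ⟨cycleAug.rootEquiv hc₁ hc₁' f,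
    fun u v => (cycleAug.rootEquiv_adj_iff hc₁ hc₁' f).symm,
    cycleAug.colour_rootEquiv hc₁ hc₁' f⟩

/-- Coloured graphs `(G, c)` and `(G', c')` (with colours in `{1, …, k}`) are
isomorphic as coloured graphs if and only if the augmented graphs `H = cycleAug G c`
and `H' = cycleAug G' c'` are isomorphic as uncoloured graphs. -/
theorem colouredIso_iff_cycleAug_iso {V W : Type*} [Fintype V] [Fintype W]
    (G : SimpleGraph V) (G' : SimpleGraph W) (k : ℕ) (c : V → ℕ) (c' : W → ℕ)
    (hc : ∀ v, 1 ≤ c v ∧ c v ≤ k) (hc' : ∀ w, 1 ≤ c' w ∧ c' w ≤ k) :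
    (∃ φ : V ≃ W, (∀ u v, G.Adj u v ↔ G'.Adj (φ u) (φ v)) ∧ ∀ v, c' (φ v) = c v) ↔
      Nonempty (cycleAug G c ≃g cycleAug G' c') :=
  colouredIso_iff_cycleAug_iso_general G G' k c c' hc hc'
end

section
/- Let G be a finite simple graph, d ≥ 0, and let S := {v ∈ V(G) : deg_G(v) > d}. If R is a d-deletion set of G of minimum size (i.e. no d-deletion set of G has strictly smaller cardinality), then R ⊆ S ∪ N_G(S). -/
open SimpleGraph Set

variable {V : Type*}

/-- The degree of a vertex: the number of its neighbours. -/
noncomputable def gdeg (G : SimpleGraph V) (v : V) : ℕ := (G.neighborSet v).ncard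

/-- The degree of `v` inside the vertex set `A`, i.e. its degree in the induced subgraph. -/
noncomputable def degreeIn (G : SimpleGraph V) (A : Set V) (v : V) : ℕ :=
  (A ∩ G.neighborSet v).ncard

/-- `R` is a `d`-deletion set for `G`: the induced subgraph of `G` on the complement
of `R` has maximum degree at most `d`. -/
def IsDelSet (G : SimpleGraph V) (d : ℕ) (R : Set V) : Prop :=
  ∀ v ∈ Rᶜ, degreeIn G Rᶜ v ≤ d

/-- The neighbourhood `N_G(S)` of a set of vertices `S`. -/
def nbhd (G : SimpleGraph V) (S : Set V) : Set V := {v | ∃ u ∈ S, G.Adj u v}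

/-! If a vertex `v` of a minimum deletion set had degree at most `d` and only neighbours of
degree at most `d`, putting `v` back into the graph would raise no degree above `d`: `v` itself
and its neighbours have small degree even in `G`, and every other vertex keeps its
neighbourhood. So `R \ {v}` would be a smaller deletion set. -/

section

variable [Finite V] (G : SimpleGraph V)

theorem degreeIn_le_gdeg (A : Set V) (v : V) : degreeIn G A v ≤ gdeg G v :=
  ncard_le_ncard inter_subset_right (toFinite _)

theorem IsDelSet.sdiff_singleton {d : ℕ} {R : Set V} (hR : IsDelSet G d R) {v : V}
    (hv : gdeg G v ≤ d) (hnbr : ∀ u, G.Adj v u → gdeg G u ≤ d) :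
    IsDelSet G d (R \ {v}) := by
  intro u hu
  by_cases huv : u = v
  · subst huv
    exact (degreeIn_le_gdeg G _ u).trans hv
  have huR : u ∈ Rᶜ := fun huR => hu ⟨huR, huv⟩
  by_cases hadj : G.Adj v u
  · exact (degreeIn_le_gdeg G _ u).trans (hnbr u hadj)
  have hsub : (R \ {v})ᶜ ∩ G.neighborSet u ⊆ Rᶜ ∩ G.neighborSet u := by
    rintro w ⟨hw, hwu⟩
    refine ⟨fun hwR => hw ⟨hwR, ?_⟩, hwu⟩
    rintro rfl
    exact hadj hwu.symm
  exact (ncard_le_ncard hsub (toFinite _)).trans (hR u huR)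

end

/-- A minimum-size `d`-deletion set is contained in `S ∪ N_G(S)`, where `S` is the
set of vertices of degree greater than `d`. -/
theorem minimum_delSet_subset {V : Type*} [Fintype V] (G : SimpleGraph V) (d : ℕ)
    (R : Set V) (hR : IsDelSet G d R)
    (hmin : ∀ R' : Set V, IsDelSet G d R' → R.ncard ≤ R'.ncard) :
    R ⊆ {v | d < gdeg G v} ∪ nbhd G {v | d < gdeg G v} := by
  intro v hvR
  by_contra hv
  simp only [nbhd, mem_union, mem_ofPred_eq, not_or, not_lt, not_exists, not_and] at hv
  obtain ⟨hdeg, hnbr⟩ := hv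
  have hdel : IsDelSet G d (R \ {v}) :=
    hR.sdiff_singleton G hdeg fun u hvu => not_lt.mp fun hu => hnbr u hu hvu.symm
  exact (hmin _ hdel).not_gt (ncard_sdiff_singleton_lt_of_mem hvR (toFinite _))
end

section
/- Let G be a finite simple graph with maximum degree at most k+d, let S := {v ∈ V(G) : deg_G(v) > d} and U := S ∪ N_G(S). If R is a minimum-size d-deletion set of G with |R| = k', then U ⊆ R ∪ N_G(R) ∪ N_G(N_G(R)), and consequently |U| ≤ k' + k'(k+d) + k'(k+d)^2. -/
open SimpleGraph Set

variable {V : Type*}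

/-!
A vertex of degree greater than `d` outside a `d`-deletion set `R` must have a neighbour in `R`,
since otherwise its whole neighbourhood survives in `G - R`. Hence `S ⊆ R ∪ N(R)`, so
`U ⊆ R ∪ N(R) ∪ N(N(R))`, and each application of `N` multiplies the size by at most `k + d`.
-/

section Nbhd

variable (G : SimpleGraph V)

lemma nbhd_mono {A B : Set V} (h : A ⊆ B) : nbhd G A ⊆ nbhd G B := by
  rintro v ⟨u, hu, hadj⟩
  exact ⟨u, h hu, hadj⟩

lemma nbhd_union (A B : Set V) : nbhd G (A ∪ B) = nbhd G A ∪ nbhd G B := by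
  ext v
  simp only [nbhd, mem_union, mem_ofPred_eq, or_and_right, exists_or]

lemma nbhd_eq_biUnion (A : Set V) : nbhd G A = ⋃ u ∈ A, G.neighborSet u := by
  ext v
  simp [nbhd]

lemma ncard_nbhd_le {A : Set V} (hA : A.Finite) {m : ℕ} (hΔ : ∀ u ∈ A, gdeg G u ≤ m) :
    (nbhd G A).ncard ≤ A.ncard * m := by
  calc (nbhd G A).ncard = (⋃ u ∈ hA.toFinset, G.neighborSet u).ncard := by
        simp only [nbhd_eq_biUnion, Finite.mem_toFinset]
    _ ≤ ∑ u ∈ hA.toFinset, gdeg G u := Finset.set_ncard_biUnion_le _ _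
    _ ≤ ∑ _u ∈ hA.toFinset, m := Finset.sum_le_sum fun u hu => hΔ u (hA.mem_toFinset.mp hu)
    _ = A.ncard * m := by rw [Finset.sum_const, smul_eq_mul, ncard_eq_toFinset_card A hA]

lemma union_nbhd_subset_of_subset {S R : Set V} (h : S ⊆ R ∪ nbhd G R) :
    S ∪ nbhd G S ⊆ R ∪ nbhd G R ∪ nbhd G (nbhd G R) := by
  calc S ∪ nbhd G S ⊆ R ∪ nbhd G R ∪ nbhd G (R ∪ nbhd G R) :=
        union_subset_union h (nbhd_mono G h)
    _ = R ∪ nbhd G R ∪ nbhd G (nbhd G R) := by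
      rw [nbhd_union, ← union_assoc, union_assoc R, union_self]

lemma ncard_union_nbhd_nbhd_le [Finite V] (R : Set V) {m : ℕ} (hΔ : ∀ v, gdeg G v ≤ m) :
    (R ∪ nbhd G R ∪ nbhd G (nbhd G R)).ncard ≤ R.ncard + R.ncard * m + R.ncard * m ^ 2 := by
  have h₁ : (nbhd G R).ncard ≤ R.ncard * m := ncard_nbhd_le G (toFinite R) fun v _ => hΔ v
  have h₂ : (nbhd G (nbhd G R)).ncard ≤ R.ncard * m ^ 2 :=
    calc (nbhd G (nbhd G R)).ncard ≤ (nbhd G R).ncard * m :=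
          ncard_nbhd_le G (toFinite _) fun v _ => hΔ v
      _ ≤ R.ncard * m * m := Nat.mul_le_mul_right m h₁
      _ = R.ncard * m ^ 2 := by ring
  calc (R ∪ nbhd G R ∪ nbhd G (nbhd G R)).ncard
      ≤ R.ncard + (nbhd G R).ncard + (nbhd G (nbhd G R)).ncard :=
        (ncard_union_le _ _).trans (Nat.add_le_add_right (ncard_union_le _ _) _)
    _ ≤ R.ncard + R.ncard * m + R.ncard * m ^ 2 := by omega

end Nbhd

lemma IsDelSet.mem_union_nbhd_of_lt_gdeg {G : SimpleGraph V} {d : ℕ} {R : Set V}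
    (hR : IsDelSet G d R) {v : V} (hv : d < gdeg G v) : v ∈ R ∪ nbhd G R := by
  by_contra hvRN
  have hvR : v ∈ Rᶜ := fun h => hvRN (Or.inl h)
  have hsub : G.neighborSet v ⊆ Rᶜ := fun u hu huR =>
    hvRN (Or.inr ⟨u, huR, hu.symm⟩)
  have hdeg : gdeg G v ≤ d := by
    have := hR v hvR
    rwa [degreeIn, inter_eq_self_of_subset_right hsub] at this
  omega

theorem kernel_bound_general {V : Type*} [Fintype V] (G : SimpleGraph V) (k d k' : ℕ)
    (hΔ : ∀ v, gdeg G v ≤ k + d)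
    (R : Set V) (hR : IsDelSet G d R)
    (hcard : R.ncard = k')
    (S U : Set V) (hS : S = {v | d < gdeg G v}) (hU : U = S ∪ nbhd G S) :
    U ⊆ R ∪ nbhd G R ∪ nbhd G (nbhd G R) ∧
      U.ncard ≤ k' + k' * (k + d) + k' * (k + d) ^ 2 := by
  have hSR : S ⊆ R ∪ nbhd G R := hS ▸ fun v hv => hR.mem_union_nbhd_of_lt_gdeg hv
  have hUR : U ⊆ R ∪ nbhd G R ∪ nbhd G (nbhd G R) := hU ▸ union_nbhd_subset_of_subset G hSR
  refine ⟨hUR, ?_⟩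
  calc U.ncard ≤ (R ∪ nbhd G R ∪ nbhd G (nbhd G R)).ncard := ncard_le_ncard hUR
    _ ≤ k' + k' * (k + d) + k' * (k + d) ^ 2 := hcard ▸ ncard_union_nbhd_nbhd_le G R hΔ

/-- If `G` has maximum degree at most `k + d`, `S` is the set of vertices of degree
greater than `d` and `U = S ∪ N_G(S)`, then for any minimum-size `d`-deletion set `R`
with `|R| = k'` we have `U ⊆ R ∪ N_G(R) ∪ N_G(N_G(R))`, and hence
`|U| ≤ k' + k'(k+d) + k'(k+d)²`. -/
theorem kernel_bound {V : Type*} [Fintype V] (G : SimpleGraph V) (k d k' : ℕ)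
    (hΔ : ∀ v, gdeg G v ≤ k + d)
    (R : Set V) (hR : IsDelSet G d R)
    (hmin : ∀ R' : Set V, IsDelSet G d R' → R.ncard ≤ R'.ncard)
    (hcard : R.ncard = k')
    (S U : Set V) (hS : S = {v | d < gdeg G v}) (hU : U = S ∪ nbhd G S) :
    U ⊆ R ∪ nbhd G R ∪ nbhd G (nbhd G R) ∧
      U.ncard ≤ k' + k' * (k + d) + k' * (k + d) ^ 2 :=
  kernel_bound_general G k d k' hΔ R hR hcard S U hS hU
end

section
/- Let G be a finite simple graph, k, d > 0 integers, and H := {v ∈ V(G) : deg_G(v) > k+d}. Then: (i) every d-deletion set of G of size at most k contains H, so if G has a d-deletion set of size at most k then |H| ≤ k; and (ii) if |H| ≤ k, then G has a d-deletion set of size at most k if and only if the induced subgraph of G on V(G) ∖ H has a d-deletion set of size at most k − |H|. -/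
open SimpleGraph Set

variable {V : Type*}

/-! A vertex of degree more than `k + d` that survives the deletion of at most `k` vertices
keeps more than `d` neighbours, so every `d`-deletion set of size at most `k` contains all such
vertices. Hence the deletion sets of size at most `k` are exactly `H ∪ R'` for deletion sets
`R'` of `G - H` of size at most `k - |H|`. -/

section

variable [Finite V] (G : SimpleGraph V) (d : ℕ)

lemma gdeg_le_degreeIn_compl_add_ncard (R : Set V) (v : V) :
    gdeg G v ≤ degreeIn G Rᶜ v + R.ncard :=
  calc gdeg G v ≤ ((Rᶜ ∩ G.neighborSet v) ∪ R).ncard :=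
        ncard_le_ncard (fun u hu => (em (u ∈ R)).elim Or.inr fun huR => Or.inl ⟨huR, hu⟩)
    _ ≤ degreeIn G Rᶜ v + R.ncard := ncard_union_le _ _

lemma IsDelSet.setOf_lt_gdeg_subset {d k : ℕ} {R : Set V} (hR : IsDelSet G d R)
    (hRk : R.ncard ≤ k) : {v | k + d < gdeg G v} ⊆ R := by
  intro v hv
  by_contra hvR
  have := gdeg_le_degreeIn_compl_add_ncard G R v
  have := hR v hvR
  replace hv : k + d < gdeg G v := hv
  omega

omit [Finite V] in
lemma isDelSet_union_iff (H R' : Set V) :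
    IsDelSet G d (H ∪ R') ↔ ∀ v ∈ Hᶜ \ R', degreeIn G (Hᶜ \ R') v ≤ d := by
  rw [IsDelSet, compl_union, inter_comm, ← sdiff_eq_compl_inter]

end

theorem kernelisation_highDeg_general {V : Type*} [Fintype V] (G : SimpleGraph V) (k d : ℕ)
    (H : Set V) (hH : H = {v | k + d < gdeg G v}) :
    ((∀ R : Set V, IsDelSet G d R → R.ncard ≤ k → H ⊆ R) ∧
      ((∃ R : Set V, IsDelSet G d R ∧ R.ncard ≤ k) → H.ncard ≤ k)) ∧
    (H.ncard ≤ k →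
      ((∃ R : Set V, IsDelSet G d R ∧ R.ncard ≤ k) ↔
        (∃ R' : Set V, R' ⊆ Hᶜ ∧ (∀ v ∈ Hᶜ \ R', degreeIn G (Hᶜ \ R') v ≤ d) ∧
          R'.ncard ≤ k - H.ncard))) := by
  have hH_subset R (hR : IsDelSet G d R) (hRk : R.ncard ≤ k) : H ⊆ R :=
    hH ▸ hR.setOf_lt_gdeg_subset G hRk
  refine ⟨⟨hH_subset, fun ⟨R, hR, hRk⟩ => (ncard_le_ncard (hH_subset R hR hRk)).trans hRk⟩,
    fun hHk => ⟨fun ⟨R, hR, hRk⟩ => ?_, fun ⟨R', _, hR', hR'k⟩ => ?_⟩⟩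
  · have hHR := hH_subset R hR hRk
    rw [← union_sdiff_cancel hHR, isDelSet_union_iff] at hR
    refine ⟨R \ H, fun v hv => hv.2, hR, ?_⟩
    rw [ncard_sdiff hHR]
    omega
  · refine ⟨H ∪ R', (isDelSet_union_iff G d H R').2 hR', ?_⟩
    have := ncard_union_le H R'
    omega

/-- Let `H` be the set of vertices of degree greater than `k + d`.  (i) Every
`d`-deletion set of size at most `k` contains `H`, so if such a set exists then
`|H| ≤ k`.  (ii) If `|H| ≤ k`, then `G` has a `d`-deletion set of size at most `k`
iff the induced subgraph of `G` on the complement of `H` has a `d`-deletion set of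
size at most `k - |H|`. -/
theorem kernelisation_highDeg {V : Type*} [Fintype V] (G : SimpleGraph V) (k d : ℕ)
    (hk : 0 < k) (hd : 0 < d) (H : Set V) (hH : H = {v | k + d < gdeg G v}) :
    ((∀ R : Set V, IsDelSet G d R → R.ncard ≤ k → H ⊆ R) ∧
      ((∃ R : Set V, IsDelSet G d R ∧ R.ncard ≤ k) → H.ncard ≤ k)) ∧
    (H.ncard ≤ k →
      ((∃ R : Set V, IsDelSet G d R ∧ R.ncard ≤ k) ↔
        (∃ R' : Set V, R' ⊆ Hᶜ ∧ (∀ v ∈ Hᶜ \ R', degreeIn G (Hᶜ \ R') v ≤ d) ∧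
          R'.ncard ≤ k - H.ncard))) :=
  kernelisation_highDeg_general G k d H hH
end

section
/- A finite simple graph G satisfies ed_d(G) ≤ k if and only if there exists an elimination order to degree d for G in which every chain contains at most k non-maximal vertices (i.e. of d-height at most k). -/
open SimpleGraph Set

variable {V : Type*}

/-- A tree order: a partial order in which the set of predecessors of any
element is linearly ordered. -/
structure IsTreeOrder (le : V → V → Prop) : Prop where
  refl : ∀ a, le a a
  antisymm : ∀ a b, le a b → le b a → a = b
  trans : ∀ a b c, le a b → le b c → le a c
  downLinear : ∀ a b c, le b a → le c a → le b c ∨ le c b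

/-- A chain: a set of pairwise comparable elements. -/
def IsChainOf (le : V → V → Prop) (s : Set V) : Prop :=
  ∀ a ∈ s, ∀ b ∈ s, le a b ∨ le b a

/-- The order has height at most `k`: every chain has at most `k` elements. -/
def HeightLE (le : V → V → Prop) (k : ℕ) : Prop :=
  ∀ s : Set V, IsChainOf le s → s.ncard ≤ k

/-- `v` is a maximal element of the order `le`. -/
def IsLeMaximal (le : V → V → Prop) (v : V) : Prop := ∀ w, le v w → w = v

/-- The order has `d`-height at most `k`: every chain contains at most `k`
non-maximal elements. -/
def DHeightLE (le : V → V → Prop) (k : ℕ) : Prop :=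
  ∀ s : Set V, IsChainOf le s → {v ∈ s | ¬ IsLeMaximal le v}.ncard ≤ k

/-- An elimination order for `G`: a tree order in which the endpoints of each
edge are comparable. -/
def IsElimOrder (G : SimpleGraph V) (le : V → V → Prop) : Prop :=
  IsTreeOrder le ∧ ∀ u v, G.Adj u v → le u v ∨ le v u

/-- The set `S_v` of neighbours of `v` that are incomparable to `v`. -/
def Sset (G : SimpleGraph V) (le : V → V → Prop) (v : V) : Set V :=
  {u | G.Adj u v ∧ ¬ le u v ∧ ¬ le v u}

/-- An elimination order to degree `d` for `G`. -/
def IsElimOrderToDeg (G : SimpleGraph V) (d : ℕ) (le : V → V → Prop) : Prop :=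
  IsTreeOrder le ∧ ∀ v : V, Sset G le v = ∅ ∨
    (IsLeMaximal le v ∧ (Sset G le v).ncard ≤ d ∧
      ∀ u ∈ Sset G le v, {w | le w u ∧ w ≠ u} = {w | le w v ∧ w ≠ v})

/-- `C` is the vertex set of a connected component of the induced subgraph `G[B]`:
a maximal connected subset of `B`. -/
def IsCompOf (G : SimpleGraph V) (B C : Set V) : Prop :=
  C.Nonempty ∧ C ⊆ B ∧ (G.induce C).Connected ∧
    ∀ C', C ⊆ C' → C' ⊆ B → (G.induce C').Connected → C' = C

/-- `TdLE G A k` says that the tree-depth of the induced subgraph `G[A]` is at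
most `k`, following the recursive definition of tree-depth. -/
inductive TdLE (G : SimpleGraph V) : Set V → ℕ → Prop
  | empty (k : ℕ) : TdLE G ∅ k
  | conn (A : Set V) (k : ℕ) (hc : (G.induce A).Connected) (v : V) (hv : v ∈ A)
      (h : TdLE G (A \ {v}) k) : TdLE G A (k + 1)
  | disconn (A : Set V) (k : ℕ) (hne : A.Nonempty) (hc : ¬ (G.induce A).Connected)
      (h : ∀ C, IsCompOf G A C → TdLE G C k) : TdLE G A k

/-- `EdLE G d A k` says that the elimination distance to degree `d` of the
induced subgraph `G[A]` is at most `k`, following the recursive definition. -/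
inductive EdLE (G : SimpleGraph V) (d : ℕ) : Set V → ℕ → Prop
  | base (A : Set V) (k : ℕ) (h : ∀ v ∈ A, degreeIn G A v ≤ d) : EdLE G d A k
  | conn (A : Set V) (k : ℕ) (hd : ¬ ∀ v ∈ A, degreeIn G A v ≤ d)
      (hc : (G.induce A).Connected) (v : V) (hv : v ∈ A)
      (h : EdLE G d (A \ {v}) k) : EdLE G d A (k + 1)
  | disconn (A : Set V) (k : ℕ) (hd : ¬ ∀ v ∈ A, degreeIn G A v ≤ d)
      (hc : ¬ (G.induce A).Connected)
      (h : ∀ C, IsCompOf G A C → EdLE G d C k) : EdLE G d A k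

/-- The `m`-degree torso of `G`: the graph on the vertices of degree greater
than `m`, where two such vertices are adjacent if some path of `G` between them
has all its internal vertices of degree at most `m`. -/
def ATorso (G : SimpleGraph V) (m : ℕ) : SimpleGraph {v : V // m < gdeg G v} where
  Adj u v := u ≠ v ∧ ∃ p : G.Walk u.1 v.1, p.IsPath ∧
      ∀ w ∈ p.support, w ≠ u.1 → w ≠ v.1 → gdeg G w ≤ m
  symm := by
    refine ⟨?_⟩
    rintro u v ⟨hne, p, hp, hsup⟩
    refine ⟨hne.symm, p.reverse, hp.reverse, fun w hw h1 h2 => ?_⟩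
    rw [SimpleGraph.Walk.support_reverse, List.mem_reverse] at hw
    exact hsup w hw h2 h1
  loopless := by refine ⟨?_⟩; rintro u ⟨hne, -⟩; exact hne rfl

/-! Forward, by induction on the derivation of `EdLE`: a deleted vertex becomes a root placed
below the order built for the rest, and the orders built for the components of a disconnected
graph are placed side by side.

Backward, by induction on `|A|`: if `G[A]` is connected and some vertex has degree above `d`,
then a minimal element of `A` lies below all of `A`; it is not maximal, so deleting it lowers
the `d`-height by one. -/

section Components

variable {G : SimpleGraph V} {A C C' : Set V} {a b : V}

lemma IsCompOf.eq_of_mem (hC : IsCompOf G A C) (hC' : IsCompOf G A C') (ha : a ∈ C)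
    (ha' : a ∈ C') : C = C' := by
  have hAU : C ∪ C' ⊆ A := union_subset hC.2.1 hC'.2.1
  have hU := G.induce_union_connected hC.2.2.1.preconnected hC'.2.2.1.preconnected ⟨a, ha, ha'⟩
  rw [← hC.2.2.2 _ subset_union_left hAU hU, hC'.2.2.2 _ subset_union_right hAU hU]

lemma IsCompOf.mem_of_adj (hC : IsCompOf G A C) (hb : b ∈ C) (ha : a ∈ A) (hab : G.Adj a b) :
    a ∈ C := by
  have hU := G.connected_induce_union hC.2.2.1.preconnected
    (Connected.of_subsingleton (G := G.induce {a})).preconnected hb rfl hab.symm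
  rw [← hC.2.2.2 _ subset_union_left (union_subset hC.2.1 (singleton_subset_iff.2 ha)) hU]
  exact Or.inr rfl

lemma exists_isCompOf_mem [Finite V] (ha : a ∈ A) : ∃ C, IsCompOf G A C ∧ a ∈ C := by
  obtain ⟨C, ⟨haC, hCA, hconn⟩, hmax⟩ :=
    (toFinite {C : Set V | a ∈ C ∧ C ⊆ A ∧ (G.induce C).Connected}).exists_maximal
      ⟨{a}, rfl, singleton_subset_iff.2 ha, Connected.of_subsingleton⟩
  exact ⟨C, ⟨⟨a, haC⟩, hCA, hconn, fun C' hCC' hC'A hC' =>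
    (hmax ⟨hCC' haC, hC'A, hC'⟩ hCC').antisymm hCC'⟩, haC⟩

lemma SimpleGraph.Connected.induce_forall_of_adj (hc : (G.induce A).Connected) {P : V → Prop}
    (hP : ∀ y ∈ A, ∀ z ∈ A, G.Adj y z → P y → P z) (ha : a ∈ A) (hb : b ∈ A) (hPa : P a) :
    P b := by
  suffices ∀ y : A, Relation.ReflTransGen (G.induce A).Adj ⟨a, ha⟩ y → P y from
    this ⟨b, hb⟩ ((reachable_iff_reflTransGen _ _).1 (hc ⟨a, ha⟩ ⟨b, hb⟩))
  intro y hy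
  induction hy with
  | refl => exact hPa
  | tail _ hadj ih => exact hP _ (Subtype.prop _) _ (Subtype.prop _) hadj ih

end Components

section Relative

variable {G : SimpleGraph V} {d k : ℕ} {le : V → V → Prop} {A B : Set V} {v : V}

def IsMaxIn (le : V → V → Prop) (A : Set V) (v : V) : Prop := ∀ w ∈ A, le v w → w = v

def IsMinIn (le : V → V → Prop) (A : Set V) (v : V) : Prop := ∀ w ∈ A, le w v → w = v

/- `IsElimOrderToDeg` and `DHeightLE` relativized to `A`: the graph is `G[A]` and the order is
`le` restricted to `A`. -/

def IsElimToDegOn (G : SimpleGraph V) (d : ℕ) (le : V → V → Prop) (A : Set V) : Prop :=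
  ∀ v ∈ A, A ∩ Sset G le v = ∅ ∨ (IsMaxIn le A v ∧ (A ∩ Sset G le v).ncard ≤ d ∧
    ∀ u ∈ A ∩ Sset G le v, A ∩ {w | le w u ∧ w ≠ u} = A ∩ {w | le w v ∧ w ≠ v})

def DHeightLEOn (le : V → V → Prop) (A : Set V) (k : ℕ) : Prop :=
  ∀ s ⊆ A, IsChainOf le s → {v ∈ s | ¬ IsMaxIn le A v}.ncard ≤ k

lemma isMaxIn_univ : IsMaxIn le univ v ↔ IsLeMaximal le v := by
  simp [IsMaxIn, IsLeMaximal]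

lemma isElimOrderToDeg_iff_on_univ :
    IsElimOrderToDeg G d le ↔ IsTreeOrder le ∧ IsElimToDegOn G d le univ := by
  simp [IsElimOrderToDeg, IsElimToDegOn, isMaxIn_univ]

lemma dHeightLE_iff_on_univ : DHeightLE le k ↔ DHeightLEOn le univ k := by
  simp [DHeightLE, DHeightLEOn, isMaxIn_univ]

lemma IsMaxIn.mono (hBA : B ⊆ A) (h : IsMaxIn le A v) : IsMaxIn le B v :=
  fun w hw => h w (hBA hw)

lemma IsElimToDegOn.mono [Finite V] (hBA : B ⊆ A) (h : IsElimToDegOn G d le A) :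
    IsElimToDegOn G d le B := by
  intro v hv
  have hS : B ∩ Sset G le v ⊆ A ∩ Sset G le v := inter_subset_inter_left _ hBA
  rcases h v (hBA hv) with hA | ⟨hmax, hcard, hdown⟩
  · exact Or.inl (subset_empty_iff.1 (hA ▸ hS))
  refine Or.inr ⟨hmax.mono hBA, (ncard_le_ncard hS).trans hcard, fun u hu => ?_⟩
  rw [← inter_eq_left.2 hBA, inter_assoc, inter_assoc, hdown u (hS hu)]

lemma DHeightLEOn.mono [Finite V] (hBA : B ⊆ A) (h : DHeightLEOn le A k) :
    DHeightLEOn le B k := by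
  intro s hs hchain
  have hsub : {v ∈ s | ¬ IsMaxIn le B v} ⊆ {v ∈ s | ¬ IsMaxIn le A v} :=
    fun x hx => ⟨hx.1, fun hmax => hx.2 (hmax.mono hBA)⟩
  exact (ncard_le_ncard hsub).trans (h s (hs.trans hBA) hchain)

end Relative

section Backward

variable {G : SimpleGraph V} {d k : ℕ} {le : V → V → Prop} {A : Set V} {r v y z : V}

lemma IsTreeOrder.exists_isMinIn [Finite V] (h : IsTreeOrder le) (hA : A.Nonempty) :
    ∃ r ∈ A, IsMinIn le A r := by
  let _ : PartialOrder V :=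
    { le := le, le_refl := h.refl, le_trans := h.trans, le_antisymm := h.antisymm }
  obtain ⟨r, hr⟩ := A.toFinite.exists_minimal hA
  exact ⟨r, hr.prop, fun w hw hwr => h.antisymm w r hwr (hr.2 hw hwr)⟩

lemma IsElimToDegOn.isMaxIn_isMinIn_of_adj (helim : IsElimToDegOn G d le A) (hy : y ∈ A)
    (hz : z ∈ A) (hyz : G.Adj y z) (hmax : IsMaxIn le A y) (hmin : IsMinIn le A y) :
    IsMaxIn le A z ∧ IsMinIn le A z := by
  have hyS : y ∈ A ∩ Sset G le z :=
    ⟨hy, hyz, fun h => hyz.ne' (hmax z hz h), fun h => hyz.ne' (hmin z hz h)⟩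
  rcases helim z hz with hS | ⟨hzmax, -, hdown⟩
  · exact absurd (hS ▸ hyS) (notMem_empty y)
  refine ⟨hzmax, fun w hw hwz => by_contra fun hwz' => ?_⟩
  have hw' : w ∈ A ∩ {w | le w y ∧ w ≠ y} := hdown y hyS ▸ ⟨hw, hwz, hwz'⟩
  exact hw'.2.2 (hmin w hw hw'.2.1)

lemma IsElimToDegOn.degreeIn_le [Finite V] (helim : IsElimToDegOn G d le A) (hv : v ∈ A)
    (hmax : IsMaxIn le A v) (hmin : IsMinIn le A v) : degreeIn G A v ≤ d := by
  have hsub : A ∩ G.neighborSet v ⊆ A ∩ Sset G le v := fun u ⟨hu, hvu⟩ =>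
    ⟨hu, hvu.symm, fun h => hvu.ne' (hmin u hu h), fun h => hvu.ne' (hmax u hu h)⟩
  rcases helim v hv with hS | ⟨-, hcard, -⟩
  · simp [degreeIn, subset_empty_iff.1 (hS ▸ hsub)]
  · exact (ncard_le_ncard hsub).trans hcard

/-- In a connected `G[A]` with a vertex of degree above `d`, no vertex is comparable only to
itself: such a vertex would pass this on to all of `A`, forcing every degree down to `d`. -/
lemma IsElimToDegOn.not_isMaxIn_and_isMinIn [Finite V] (helim : IsElimToDegOn G d le A)
    (hc : (G.induce A).Connected) (hv : v ∈ A) (hdeg : d < degreeIn G A v) (hy : y ∈ A) :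
    ¬ (IsMaxIn le A y ∧ IsMinIn le A y) := fun hiso =>
  have hv' := hc.induce_forall_of_adj
    (fun _ hy _ hz hyz h => helim.isMaxIn_isMinIn_of_adj hy hz hyz h.1 h.2) hy hv hiso
  (helim.degreeIn_le hv hv'.1 hv'.2).not_gt hdeg

/-- For `r` minimal in `A`, the elements above `r` form a set closed under the edges of `G[A]`:
across an incomparable edge `y z` the strict down-sets of `y` and `z` agree, and `r = y` would
leave `y` comparable only to itself. -/
lemma IsElimToDegOn.exists_root [Finite V] (htree : IsTreeOrder le)
    (helim : IsElimToDegOn G d le A) (hc : (G.induce A).Connected) (hv : v ∈ A)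
    (hdeg : d < degreeIn G A v) : ∃ r ∈ A, (∀ x ∈ A, le r x) ∧ ¬ IsMaxIn le A r := by
  obtain ⟨r, hrA, hrmin⟩ := htree.exists_isMinIn ⟨v, hv⟩
  have hrmax : ¬ IsMaxIn le A r := fun h =>
    helim.not_isMaxIn_and_isMinIn hc hv hdeg hrA ⟨h, hrmin⟩
  refine ⟨r, hrA, fun x hx => hc.induce_forall_of_adj ?_ hrA hx (htree.refl r), hrmax⟩
  intro y hy z hz hyz hry
  by_cases hyz_le : le y z
  · exact htree.trans _ _ _ hry hyz_le
  by_cases hzy_le : le z y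
  · rcases htree.downLinear y r z hry hzy_le with h | h
    · exact h
    · exact hrmin z hz h ▸ htree.refl r
  have hzS : z ∈ A ∩ Sset G le y := ⟨hz, hyz.symm, hzy_le, hyz_le⟩
  rcases helim y hy with hS | ⟨hymax, -, hdown⟩
  · exact absurd (hS ▸ hzS) (notMem_empty z)
  have hry' : r ≠ y := by rintro rfl; exact hrmax hymax
  have hr : r ∈ A ∩ {w | le w z ∧ w ≠ z} := (hdown z hzS).symm ▸ ⟨hrA, hry, hry'⟩
  exact hr.2.1

lemma DHeightLEOn.one_le (hht : DHeightLEOn le A k) (hrA : r ∈ A) (hrr : le r r)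
    (hrmax : ¬ IsMaxIn le A r) : 1 ≤ k := by
  have hchain : IsChainOf le {r} := by
    rintro a rfl b rfl; exact Or.inl hrr
  have h := hht {r} (singleton_subset_iff.2 hrA) hchain
  rwa [sep_eq_self_iff_mem_true.2 (by rintro _ rfl; exact hrmax), ncard_singleton] at h

lemma DHeightLEOn.sdiff_singleton [Finite V] (hht : DHeightLEOn le A (k + 1)) (hrA : r ∈ A)
    (hr : ∀ x ∈ A, le r x) (hrmax : ¬ IsMaxIn le A r) : DHeightLEOn le (A \ {r}) k := by
  intro s hs hchain
  have hchain' : IsChainOf le (insert r s) := by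
    rintro a (rfl | ha) b (rfl | hb)
    · exact Or.inl (hr _ hrA)
    · exact Or.inl (hr _ (hs hb).1)
    · exact Or.inr (hr _ (hs ha).1)
    · exact hchain a ha b hb
  have hsub : insert r {v ∈ s | ¬ IsMaxIn le (A \ {r}) v} ⊆
      {v ∈ insert r s | ¬ IsMaxIn le A v} := by
    rintro x (rfl | ⟨hx, hxmax⟩)
    · exact ⟨mem_insert x s, hrmax⟩
    · exact ⟨mem_insert_of_mem r hx, fun h => hxmax (h.mono sdiff_subset)⟩
  have hrs : r ∉ {v ∈ s | ¬ IsMaxIn le (A \ {r}) v} := fun h => (hs h.1).2 rfl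
  have h := (ncard_le_ncard hsub).trans
    (hht _ (insert_subset hrA (hs.trans sdiff_subset)) hchain')
  rwa [ncard_insert_of_notMem hrs, add_le_add_iff_right] at h

theorem edLE_of_isElimToDegOn [Finite V] (htree : IsTreeOrder le) (helim : IsElimToDegOn G d le A)
    (hht : DHeightLEOn le A k) : EdLE G d A k := by
  induction hn : A.ncard using Nat.strong_induction_on generalizing A k with
  | _ n ih =>
  subst hn
  by_cases hd : ∀ v ∈ A, degreeIn G A v ≤ d
  · exact .base A k hd
  by_cases hc : (G.induce A).Connected
  · obtain ⟨v, hv, hdeg⟩ : ∃ v ∈ A, d < degreeIn G A v := by simpa using hd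
    obtain ⟨r, hrA, hr, hrmax⟩ := helim.exists_root htree hc hv hdeg
    obtain ⟨k, rfl⟩ := Nat.exists_eq_add_of_le' (hht.one_le hrA (htree.refl r) hrmax)
    exact .conn A k hd hc r hrA (ih _ (ncard_sdiff_singleton_lt_of_mem hrA)
      (helim.mono sdiff_subset) (hht.sdiff_singleton hrA hr hrmax) rfl)
  · refine .disconn A k hd hc fun C hC => ih _ ?_ (helim.mono hC.2.1) (hht.mono hC.2.1) rfl
    exact ncard_lt_ncard (ssubset_of_subset_of_ne hC.2.1 (by rintro rfl; exact hc hC.2.2.1))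

end Backward

section Forward

variable {G : SimpleGraph V} {d k : ℕ} {le : V → V → Prop} {A C : Set V} {a b r w : V}
  {f : Set V → V → V → Prop}

def SupportedOn (le : V → V → Prop) (A : Set V) : Prop :=
  ∀ a b, le a b → a = b ∨ a ∈ A ∧ b ∈ A

lemma isTreeOrder_eq : IsTreeOrder (@Eq V) :=
  ⟨fun _ => rfl, fun _ _ h _ => h, fun _ _ _ => Eq.trans,
    fun _ _ _ h h' => Or.inl (h.trans h'.symm)⟩

lemma isElimToDegOn_eq (hdeg : ∀ v ∈ A, degreeIn G A v ≤ d) : IsElimToDegOn G d Eq A := by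
  intro v hv
  have hS : A ∩ Sset G Eq v = A ∩ G.neighborSet v := by
    ext u
    simp only [Sset, mem_inter_iff, mem_ofPred_eq, mem_neighborSet]
    exact and_congr_right fun _ => ⟨fun h => h.1.symm, fun h => ⟨h.symm, h.ne', h.ne⟩⟩
  refine Or.inr ⟨fun _ _ h => h.symm, hS ▸ hdeg v hv, fun u _ => ?_⟩
  simp

lemma dHeightLEOn_eq : DHeightLEOn (@Eq V) A k := fun s _ _ => by
  simp [IsMaxIn]

def addRoot (le : V → V → Prop) (A : Set V) (r a b : V) : Prop := le a b ∨ a = r ∧ b ∈ A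

lemma addRoot_iff_of_ne (ha : a ≠ r) : addRoot le A r a b ↔ le a b := by
  simp [addRoot, ha]

lemma SupportedOn.eq_of_le_root (hs : SupportedOn le (A \ {r})) (h : le a r) : a = r :=
  (hs a r h).resolve_right fun h => h.2.2 rfl

lemma SupportedOn.mem_right_of_le (hs : SupportedOn le (A \ {r})) (h : le a b) (ha : a ∈ A) :
    b ∈ A :=
  (hs a b h).elim (· ▸ ha) fun h => h.2.1

lemma SupportedOn.mem_left_of_le (hs : SupportedOn le (A \ {r})) (h : le a b) (hb : b ∈ A) :
    a ∈ A :=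
  (hs a b h).elim (· ▸ hb) fun h => h.1.1

lemma isTreeOrder_addRoot (htree : IsTreeOrder le) (hs : SupportedOn le (A \ {r})) :
    IsTreeOrder (addRoot le A r) := by
  refine ⟨fun a => Or.inl (htree.refl a), ?_, ?_, ?_⟩
  · rintro a b (hab | ⟨rfl, -⟩) (hba | ⟨rfl, -⟩)
    · exact htree.antisymm a b hab hba
    · exact hs.eq_of_le_root hab
    · exact (hs.eq_of_le_root hba).symm
    · rfl
  · rintro a b c (hab | ⟨rfl, hb⟩) (hbc | ⟨rfl, hc⟩)
    · exact Or.inl (htree.trans a b c hab hbc)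
    · exact Or.inr ⟨hs.eq_of_le_root hab, hc⟩
    · exact Or.inr ⟨rfl, hs.mem_right_of_le hbc hb⟩
    · exact Or.inr ⟨rfl, hc⟩
  · rintro a b c (hba | ⟨rfl, ha⟩) (hca | ⟨rfl, ha'⟩)
    · exact (htree.downLinear a b c hba hca).imp Or.inl Or.inl
    · exact Or.inr (Or.inr ⟨rfl, hs.mem_left_of_le hba ha'⟩)
    · exact Or.inl (Or.inr ⟨rfl, hs.mem_left_of_le hca ha⟩)
    · exact Or.inl (Or.inl (htree.refl _))

lemma supportedOn_addRoot (hs : SupportedOn le (A \ {r})) (hr : r ∈ A) :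
    SupportedOn (addRoot le A r) A := by
  rintro a b (hab | ⟨rfl, hb⟩)
  · exact (hs a b hab).imp_right fun h => ⟨h.1.1, h.2.1⟩
  · exact Or.inr ⟨hr, hb⟩

lemma SupportedOn.isMaxIn_addRoot (hs : SupportedOn le (A \ {r})) (hw : w ≠ r)
    (h : IsMaxIn le (A \ {r}) w) : IsMaxIn (addRoot le A r) A w := by
  intro x _ hwx
  rw [addRoot_iff_of_ne hw] at hwx
  exact (hs w x hwx).elim Eq.symm fun hx => h x hx.2 hwx

lemma inter_sset_addRoot (hwA : w ∈ A) (hw : w ≠ r) :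
    A ∩ Sset G (addRoot le A r) w = (A \ {r}) ∩ Sset G le w := by
  ext u
  simp only [Sset, addRoot, mem_inter_iff, mem_sdiff, mem_singleton_iff, mem_ofPred_eq, hw,
    false_and, or_false, not_or, not_and]
  exact ⟨fun ⟨hu, hadj, ⟨h1, h2⟩, h3⟩ => ⟨⟨hu, fun hur => h2 hur hwA⟩, hadj, h1, h3⟩,
    fun ⟨⟨hu, hur⟩, hadj, h1, h3⟩ => ⟨hu, hadj, ⟨h1, fun h => absurd h hur⟩, h3⟩⟩

lemma inter_predSet_addRoot (hr : r ∈ A) {u : V} (hu : u ∈ A \ {r}) :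
    A ∩ {x | addRoot le A r x u ∧ x ≠ u} = insert r ((A \ {r}) ∩ {x | le x u ∧ x ≠ u}) := by
  ext x
  by_cases hxr : x = r
  · subst hxr
    simpa [addRoot, hr, hu.1] using fun h => hu.2 h.symm
  · simp [addRoot_iff_of_ne hxr, hxr]

lemma isElimToDegOn_addRoot (helim : IsElimToDegOn G d le (A \ {r})) (hs : SupportedOn le (A \ {r}))
    (hr : r ∈ A) : IsElimToDegOn G d (addRoot le A r) A := by
  intro w hwA
  by_cases hwr : w = r
  · subst hwr
    exact Or.inl (eq_empty_of_forall_notMem fun u hu => hu.2.2.2 (Or.inr ⟨rfl, hu.1⟩))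
  rw [inter_sset_addRoot hwA hwr]
  refine (helim w ⟨hwA, hwr⟩).imp_right fun ⟨hmax, hcard, hdown⟩ =>
    ⟨hs.isMaxIn_addRoot hwr hmax, hcard, fun u hu => ?_⟩
  rw [inter_predSet_addRoot hr hu.1, inter_predSet_addRoot hr ⟨hwA, hwr⟩, hdown u hu]

lemma dHeightLEOn_addRoot [Finite V] (hht : DHeightLEOn le (A \ {r}) k)
    (hs : SupportedOn le (A \ {r})) : DHeightLEOn (addRoot le A r) A (k + 1) := by
  intro s hsA hchain
  have hchain' : IsChainOf le (s \ {r}) := fun a ha b hb => by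
    simpa only [addRoot_iff_of_ne ha.2, addRoot_iff_of_ne hb.2] using hchain a ha.1 b hb.1
  have hsub : {x ∈ s | ¬ IsMaxIn (addRoot le A r) A x} ⊆
      insert r {x ∈ s \ {r} | ¬ IsMaxIn le (A \ {r}) x} := by
    rintro x ⟨hxs, hxmax⟩
    by_cases hxr : x = r
    · exact hxr ▸ mem_insert x _
    · exact mem_insert_of_mem r ⟨⟨hxs, hxr⟩, fun h => hxmax (hs.isMaxIn_addRoot hxr h)⟩
  calc {x ∈ s | ¬ IsMaxIn (addRoot le A r) A x}.ncard
      ≤ (insert r {x ∈ s \ {r} | ¬ IsMaxIn le (A \ {r}) x}).ncard := ncard_le_ncard hsub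
    _ ≤ {x ∈ s \ {r} | ¬ IsMaxIn le (A \ {r}) x}.ncard + 1 := ncard_insert_le _ _
    _ ≤ k + 1 := Nat.add_le_add_right
        (hht _ (fun x hx => ⟨hsA hx.1, hx.2⟩) hchain') 1

def glueComps (G : SimpleGraph V) (A : Set V) (f : Set V → V → V → Prop) (a b : V) : Prop :=
  a = b ∨ ∃ C, IsCompOf G A C ∧ a ∈ C ∧ b ∈ C ∧ f C a b

lemma IsCompOf.mem_iff_of_glueComps (hC : IsCompOf G A C) (h : glueComps G A f a b) :
    a ∈ C ↔ b ∈ C := by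
  rcases h with rfl | ⟨C', hC', ha, hb, -⟩
  · rfl
  exact ⟨fun haC => hC'.eq_of_mem hC ha haC ▸ hb, fun hbC => hC'.eq_of_mem hC hb hbC ▸ ha⟩

lemma IsCompOf.glueComps_iff (hC : IsCompOf G A C) (htree : IsTreeOrder (f C)) (ha : a ∈ C)
    (hb : b ∈ C) : glueComps G A f a b ↔ f C a b := by
  refine ⟨?_, fun h => Or.inr ⟨C, hC, ha, hb, h⟩⟩
  rintro (rfl | ⟨C', hC', ha', hb', h⟩)
  · exact htree.refl a
  · exact hC'.eq_of_mem hC ha' ha ▸ h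

lemma isTreeOrder_glueComps (htree : ∀ C, IsCompOf G A C → IsTreeOrder (f C)) :
    IsTreeOrder (glueComps G A f) := by
  refine ⟨fun a => Or.inl rfl, ?_, ?_, ?_⟩
  · rintro a b (rfl | ⟨C, hC, ha, hb, hab⟩) hba
    · rfl
    · exact (htree C hC).antisymm a b hab ((hC.glueComps_iff (htree C hC) hb ha).1 hba)
  · rintro a b c (rfl | ⟨C, hC, ha, hb, hab⟩) hbc
    · exact hbc
    have hc := (hC.mem_iff_of_glueComps hbc).1 hb
    exact Or.inr ⟨C, hC, ha, hc,
      (htree C hC).trans a b c hab ((hC.glueComps_iff (htree C hC) hb hc).1 hbc)⟩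
  · rintro a b c (rfl | ⟨C, hC, hb, ha, hba⟩) hca
    · exact Or.inr hca
    have hc := (hC.mem_iff_of_glueComps hca).2 ha
    exact ((htree C hC).downLinear a b c hba ((hC.glueComps_iff (htree C hC) hc ha).1 hca)).imp
      (hC.glueComps_iff (htree C hC) hb hc).2 (hC.glueComps_iff (htree C hC) hc hb).2

lemma supportedOn_glueComps : SupportedOn (glueComps G A f) A := by
  rintro a b (rfl | ⟨C, hC, ha, hb, -⟩)
  · exact Or.inl rfl
  · exact Or.inr ⟨hC.2.1 ha, hC.2.1 hb⟩

lemma IsCompOf.isMaxIn_glueComps (hC : IsCompOf G A C) (htree : IsTreeOrder (f C))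
    (hw : w ∈ C) (h : IsMaxIn (f C) C w) : IsMaxIn (glueComps G A f) A w := fun x _ hwx =>
  have hx := (hC.mem_iff_of_glueComps hwx).1 hw
  h x hx ((hC.glueComps_iff htree hw hx).1 hwx)

lemma isElimToDegOn_glueComps [Finite V] (htree : ∀ C, IsCompOf G A C → IsTreeOrder (f C))
    (helim : ∀ C, IsCompOf G A C → IsElimToDegOn G d (f C) C) :
    IsElimToDegOn G d (glueComps G A f) A := by
  intro w hwA
  obtain ⟨C, hC, hwC⟩ := exists_isCompOf_mem (G := G) hwA
  have hS : A ∩ Sset G (glueComps G A f) w = C ∩ Sset G (f C) w := by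
    ext u
    refine ⟨fun ⟨hu, hadj, h⟩ => ?_, fun ⟨hu, hadj, h⟩ => ?_⟩
    · have huC := hC.mem_of_adj hwC hu hadj
      rw [hC.glueComps_iff (htree C hC) huC hwC, hC.glueComps_iff (htree C hC) hwC huC] at h
      exact ⟨huC, hadj, h⟩
    · rw [← hC.glueComps_iff (htree C hC) hu hwC, ← hC.glueComps_iff (htree C hC) hwC hu] at h
      exact ⟨hC.2.1 hu, hadj, h⟩
  have hdown : ∀ u ∈ C, A ∩ {x | glueComps G A f x u ∧ x ≠ u} = C ∩ {x | f C x u ∧ x ≠ u} := by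
    intro u hu
    ext x
    refine ⟨fun ⟨_, hxu, hne⟩ => ?_, fun ⟨hx, hxu, hne⟩ => ?_⟩
    · have hx := (hC.mem_iff_of_glueComps hxu).2 hu
      exact ⟨hx, (hC.glueComps_iff (htree C hC) hx hu).1 hxu, hne⟩
    · exact ⟨hC.2.1 hx, (hC.glueComps_iff (htree C hC) hx hu).2 hxu, hne⟩
  rw [hS]
  refine (helim C hC w hwC).imp_right fun ⟨hmax, hcard, hpred⟩ =>
    ⟨hC.isMaxIn_glueComps (htree C hC) hwC hmax, hcard, fun u hu => ?_⟩
  rw [hdown u hu.1, hdown w hwC, hpred u hu]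

lemma dHeightLEOn_glueComps [Finite V] (htree : ∀ C, IsCompOf G A C → IsTreeOrder (f C))
    (hht : ∀ C, IsCompOf G A C → DHeightLEOn (f C) C k) :
    DHeightLEOn (glueComps G A f) A k := by
  intro s hsA hchain
  rcases s.eq_empty_or_nonempty with rfl | ⟨a, has⟩
  · simp
  obtain ⟨C, hC, haC⟩ := exists_isCompOf_mem (G := G) (hsA has)
  have hsC : s ⊆ C := fun x hx => (hchain a has x hx).elim
    (fun h => (hC.mem_iff_of_glueComps h).1 haC) (fun h => (hC.mem_iff_of_glueComps h).2 haC)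
  have hchainC : IsChainOf (f C) s := fun x hx y hy => by
    simpa only [hC.glueComps_iff (htree C hC) (hsC hx) (hsC hy),
      hC.glueComps_iff (htree C hC) (hsC hy) (hsC hx)] using hchain x hx y hy
  have hsub : {x ∈ s | ¬ IsMaxIn (glueComps G A f) A x} ⊆ {x ∈ s | ¬ IsMaxIn (f C) C x} :=
    fun x ⟨hx, hxmax⟩ => ⟨hx, fun h => hxmax (hC.isMaxIn_glueComps (htree C hC) (hsC hx) h)⟩
  exact (ncard_le_ncard hsub).trans (hht C hC s hsC hchainC)

theorem EdLE.exists_elimOrderOn [Finite V] (h : EdLE G d A k) :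
    ∃ le, IsTreeOrder le ∧ IsElimToDegOn G d le A ∧ DHeightLEOn le A k ∧ SupportedOn le A := by
  induction h with
  | base A k hdeg =>
    exact ⟨Eq, isTreeOrder_eq, isElimToDegOn_eq hdeg, dHeightLEOn_eq, fun _ _ h => Or.inl h⟩
  | conn A k _ _ r hr _ ih =>
    obtain ⟨le, htree, helim, hht, hs⟩ := ih
    exact ⟨addRoot le A r, isTreeOrder_addRoot htree hs, isElimToDegOn_addRoot helim hs hr,
      dHeightLEOn_addRoot hht hs, supportedOn_addRoot hs hr⟩
  | disconn A k _ _ _ ih =>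
    choose! f htree helim hht _ using ih
    exact ⟨glueComps G A f, isTreeOrder_glueComps htree, isElimToDegOn_glueComps htree helim,
      dHeightLEOn_glueComps htree hht, supportedOn_glueComps⟩

end Forward

/-- `ed_d(G) ≤ k` iff there is an elimination order to degree `d` for `G` in which
every chain contains at most `k` non-maximal vertices. -/
theorem edLE_iff_elimOrderToDeg {V : Type*} [Fintype V] (G : SimpleGraph V) (d k : ℕ) :
    EdLE G d Set.univ k ↔
      ∃ le : V → V → Prop, IsElimOrderToDeg G d le ∧ DHeightLE le k := by
  simp only [isElimOrderToDeg_iff_on_univ, dHeightLE_iff_on_univ, and_assoc]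
  refine ⟨fun h => ?_, fun ⟨_, htree, helim, hht⟩ => edLE_of_isElimToDegOn htree helim hht⟩
  obtain ⟨le, htree, helim, hht, -⟩ := h.exists_elimOrderOn
  exact ⟨le, htree, helim, hht⟩
end
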